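/- arXiv:2505.10768 — 2 statements merged into one kernel-verified Lean document; each statement's English description precedes it below -/
import Mathlib

section
/- Let n ≥ 1, r ∈ (2,∞), s > 1 with s > n(1/2 − 1/r), and let p ≥ 2 be an integer satisfying min{r/2, 1 + r/(2s) − 1/s} ≤ p, and, in case 2s < n, also p < 1 + n/(n−2s) and p ≤ 1 + 2/(n−2s). Then the intersection [max{(n/s)(1/2 − 1/r), (n/2 − s)(p−1)}, min{1, (n/r)(p−1)}] ∩ (0, n/2) is nonempty, where (n/2 − s)(p−1) is interpreted as 0 when 2s ≥ n. -/
set_option maxHeartbeats 1000000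


/-- Nonemptiness of the interval intersection (condition (C.q4)) in Step 3 of the
nonlinear estimate: under the assumptions, the set
`[max{(n/s)(1/2 − 1/r), (n/2 − s)(p−1)}, min{1, (n/r)(p−1)}] ∩ (0, n/2)` is nonempty,
where `(n/2 − s)(p−1)` is interpreted as `0` when `2s ≥ n`. -/
theorem stmt7 (n : ℕ) (hn : 1 ≤ n) (r s : ℝ) (hr : 2 < r) (hs1 : 1 < s)
    (hs : (n : ℝ) * (1/2 - 1/r) < s) (p : ℕ) (hp : 2 ≤ p)
    (hplow : min (r / 2) (1 + r / (2 * s) - 1 / s) ≤ (p : ℝ))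
    (hsub : 2 * s < (n : ℝ) →
      ((p : ℝ) < 1 + (n : ℝ) / ((n : ℝ) - 2 * s) ∧
        (p : ℝ) ≤ 1 + 2 / ((n : ℝ) - 2 * s))) :
    (Set.Icc
        (max ((n : ℝ) / s * (1/2 - 1/r))
          (if 2 * s < (n : ℝ) then ((n : ℝ) / 2 - s) * ((p : ℝ) - 1) else 0))
        (min 1 ((n : ℝ) / r * ((p : ℝ) - 1))) ∩
      Set.Ioo (0 : ℝ) ((n : ℝ) / 2)).Nonempty := by
  have hr0 : (0:ℝ) < r := by linarith
  have hs0 : (0:ℝ) < s := by linarith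
  have hn1 : (1:ℝ) ≤ (n:ℝ) := by exact_mod_cast hn
  have hn0 : (0:ℝ) < (n:ℝ) := by linarith
  have hp2 : (2:ℝ) ≤ (p:ℝ) := by exact_mod_cast hp
  have hp1 : (1:ℝ) ≤ (p:ℝ) - 1 := by linarith
  have hir : 1/r < 1/2 := by
    rw [div_lt_div_iff₀ hr0 two_pos]; linarith
  have hir0 : (0:ℝ) < 1/r := by positivity
  -- first argument of max is positive
  have hpos1 : (0:ℝ) < (n:ℝ) / s * (1/2 - 1/r) :=
    mul_pos (div_pos hn0 hs0) (by linarith)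
  -- first argument of max is < n/2
  have hlt1 : (n:ℝ) / s * (1/2 - 1/r) < (n:ℝ) / 2 := by
    rw [div_mul_eq_mul_div, div_lt_iff₀ hs0]
    nlinarith [mul_pos hn0 hir0]
  -- first argument ≤ 1
  have hle1 : (n:ℝ) / s * (1/2 - 1/r) ≤ 1 := by
    rw [div_mul_eq_mul_div, div_le_one hs0]; linarith
  -- key: r/2 - 1 ≤ s * (p - 1)
  have key : r/2 - 1 ≤ s * ((p:ℝ) - 1) := by
    rcases min_le_iff.mp hplow with h | h
    · nlinarith [mul_le_mul_of_nonneg_left hp1 (le_of_lt hs0)]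
    · have h' : r/(2*s) - 1/s ≤ (p:ℝ) - 1 := by linarith
      have := mul_le_mul_of_nonneg_left h' hs0.le
      have h2 : s * (r/(2*s) - 1/s) = r/2 - 1 := by field_simp
      linarith [h2 ▸ this]
  -- first argument ≤ (n/r)(p-1)
  have hle2 : (n:ℝ) / s * (1/2 - 1/r) ≤ (n:ℝ) / r * ((p:ℝ) - 1) := by
    rw [div_mul_eq_mul_div, div_mul_eq_mul_div, div_le_div_iff₀ hs0 hr0]
    have hx : (n:ℝ) * (1/2 - 1/r) * r = (n:ℝ) * (r/2 - 1) := by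
      field_simp
    rw [hx]
    nlinarith [mul_le_mul_of_nonneg_left key hn0.le]
  -- properties of the second argument of max
  set L : ℝ := if 2 * s < (n : ℝ) then ((n : ℝ) / 2 - s) * ((p : ℝ) - 1) else 0 with hL
  have hL1 : L ≤ 1 := by
    rw [hL]; split_ifs with hc
    · have hd : (0:ℝ) < (n:ℝ) - 2*s := by linarith
      have h2 : ((p:ℝ) - 1) * ((n:ℝ) - 2*s) ≤ 2 := by
        have := (hsub hc).2
        have h3 : (p:ℝ) - 1 ≤ 2 / ((n:ℝ) - 2*s) := by linarith
        calc ((p:ℝ) - 1) * ((n:ℝ) - 2*s) ≤ (2 / ((n:ℝ) - 2*s)) * ((n:ℝ) - 2*s) :=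
              mul_le_mul_of_nonneg_right h3 hd.le
          _ = 2 := by field_simp
      nlinarith
    · norm_num
  have hL2 : L ≤ (n:ℝ) / r * ((p:ℝ) - 1) := by
    rw [hL]; split_ifs with hc
    · have h4 : (n:ℝ)/2 - s ≤ (n:ℝ)/r := by
        have hnr : (n:ℝ) * (1/2 - 1/r) = (n:ℝ)/2 - (n:ℝ)/r := by ring
        linarith [hnr ▸ hs]
      exact mul_le_mul_of_nonneg_right h4 (by linarith)
    · positivity
  have hLlt : L < (n:ℝ) / 2 := by
    rw [hL]; split_ifs with hc
    · have hd : (0:ℝ) < (n:ℝ) - 2*s := by linarith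
      have h2 : ((p:ℝ) - 1) * ((n:ℝ) - 2*s) < (n:ℝ) := by
        have := (hsub hc).1
        have h3 : (p:ℝ) - 1 < (n:ℝ) / ((n:ℝ) - 2*s) := by linarith
        calc ((p:ℝ) - 1) * ((n:ℝ) - 2*s) < ((n:ℝ) / ((n:ℝ) - 2*s)) * ((n:ℝ) - 2*s) :=
              mul_lt_mul_of_pos_right h3 hd
          _ = (n:ℝ) := by field_simp
      nlinarith
    · linarith
  refine ⟨max ((n:ℝ) / s * (1/2 - 1/r)) L, ⟨le_refl _, le_min (max_le hle1 hL1) (max_le hle2 hL2)⟩,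
    lt_of_lt_of_le hpos1 (le_max_left _ _), max_lt hlt1 hLlt⟩
end

section
/- Let p ≥ 2 be an integer, q ∈ [1,∞] and α₀ ∈ [1,∞] with 1/α₀ − (p−1)/q ≥ 0, and define 1/α_j = 1/α₀ − j/q for j = 0,…,p−1 and 1/β₀ = 1/α₀ − (p−1)/q. Suppose a seminorm ‖·‖_A and a norm ‖·‖_{L} satisfy the Leibniz-type estimate ‖fg‖_{A_{α_j}} ≤ C(‖f‖_{A_{α_{j+1}}}‖g‖_{L^q} + ‖g‖_{A_{β₀}}‖f‖_{L^{q/(p−j−1)}}) for products of j factors removed, together with the Hölder inequality ‖w₁⋯w_k‖_{L^{q/k}} ≤ ∏‖w_i‖_{L^q}. Then ‖w₁w₂⋯w_p‖_{A_{α₀}} ≤ C' ∑_{m=1}^p (‖w_m‖_{A_{β₀}} ∏_{ℓ≠m} ‖w_ℓ‖_{L^q}). -/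
/-- Abstract iterated fractional Leibniz rule (Step 1 of the nonlinear estimate):
from a two-factor Leibniz-type estimate for a family of seminorms `A` (indexed by the
reciprocal integrability exponent) and Hölder's inequality for the norms `L`, one
deduces the `p`-factor product estimate with one `A_{β₀}`-factor and `p−1`
`L^q`-factors, where `1/α_j = 1/α₀ − j/q` and `1/β₀ = 1/α₀ − (p−1)/q`. -/
theorem stmt9 {E : Type*} [CommMonoid E] (p : ℕ) (hp : 2 ≤ p)
    (A L : ℝ → E → ℝ) (invα₀ invq : ℝ) (hq : 0 ≤ invq)
    (hβ : 0 ≤ invα₀ - ((p : ℝ) - 1) * invq)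
    (C : ℝ) (hC : 0 < C)
    (hA : ∀ i f, 0 ≤ A i f) (hL : ∀ i f, 0 ≤ L i f)
    (hLeib : ∀ j : ℕ, j ≤ p - 2 → ∀ f g : E,
      A (invα₀ - (j : ℝ) * invq) (f * g) ≤
        C * (A (invα₀ - ((j : ℝ) + 1) * invq) f * L invq g +
          A (invα₀ - ((p : ℝ) - 1) * invq) g * L (((p : ℝ) - (j : ℝ) - 1) * invq) f))
    (hHold : ∀ (k : ℕ) (w : Fin k → E),
      L ((k : ℝ) * invq) (∏ i, w i) ≤ ∏ i, L invq (w i)) :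
    ∃ C' > 0, ∀ w : Fin p → E,
      A invα₀ (∏ i, w i) ≤
        C' * ∑ m : Fin p, A (invα₀ - ((p : ℝ) - 1) * invq) (w m) *
          ∏ ℓ ∈ Finset.univ.erase m, L invq (w ℓ) := by
  set s := invα₀ - ((p : ℝ) - 1) * invq with hs
  have erase_eq : ∀ (k : ℕ) (m : Fin k) (F : Fin k → ℝ),
      ∏ ℓ ∈ Finset.univ.erase m, F ℓ = ∏ ℓ, if ℓ = m then 1 else F ℓ := by
    intro k m F
    calc ∏ ℓ ∈ Finset.univ.erase m, F ℓ
        = ∏ ℓ ∈ Finset.univ.erase m, (if ℓ = m then 1 else F ℓ) := by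
          refine Finset.prod_congr rfl fun x hx => ?_
          rw [if_neg (Finset.ne_of_mem_erase hx)]
      _ = ∏ ℓ, if ℓ = m then 1 else F ℓ := Finset.prod_erase _ (by simp)
  have key : ∀ n, 1 ≤ n → n ≤ p → ∃ C' > 0, ∀ w : Fin n → E,
      A (s + ((n : ℝ) - 1) * invq) (∏ i, w i) ≤
        C' * ∑ m : Fin n, A s (w m) * ∏ ℓ ∈ Finset.univ.erase m, L invq (w ℓ) := by
    intro n hn
    induction n, hn using Nat.le_induction with
    | base =>
      intro _
      refine ⟨1, one_pos, fun w => ?_⟩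
      have : ((1 : ℕ) : ℝ) - 1 = 0 := by norm_num
      rw [this]
      simp [Fin.prod_univ_one]
    | succ n hn ih =>
      intro hnp
      obtain ⟨C', hC', ihn⟩ := ih (by omega)
      refine ⟨C * (C' + 1), by positivity, fun w => ?_⟩
      have hcast : ((p - (n + 1) : ℕ) : ℝ) = (p : ℝ) - (n : ℝ) - 1 := by
        rw [Nat.cast_sub hnp]; push_cast; ring
      have main := hLeib (p - (n + 1)) (by omega) (∏ i : Fin n, w i.succ) (w 0)
      rw [hcast] at main
      have e1 : invα₀ - ((p : ℝ) - (n : ℝ) - 1) * invq = s + (n : ℝ) * invq := by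
        rw [hs]; ring
      have e2 : invα₀ - ((p : ℝ) - (n : ℝ) - 1 + 1) * invq = s + ((n : ℝ) - 1) * invq := by
        rw [hs]; ring
      have e3 : ((p : ℝ) - ((p : ℝ) - (n : ℝ) - 1) - 1) * invq = (n : ℝ) * invq := by ring
      rw [e1, e2, e3] at main
      have hH := hHold n (fun i => w i.succ)
      have hI := ihn (fun i => w i.succ)
      have hprod : (∏ i : Fin (n + 1), w i) = (∏ i : Fin n, w i.succ) * w 0 := by
        rw [Fin.prod_univ_succ, mul_comm]
      have egoal : s + (((n + 1 : ℕ) : ℝ) - 1) * invq = s + (n : ℝ) * invq := by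
        push_cast; ring
      rw [egoal, hprod]
      set P := ∏ i : Fin n, L invq (w i.succ) with hP
      set S := ∑ m : Fin n, A s (w m.succ) * ∏ ℓ ∈ Finset.univ.erase m, L invq (w ℓ.succ) with hS
      have hsum : (∑ m : Fin (n + 1), A s (w m) * ∏ ℓ ∈ Finset.univ.erase m, L invq (w ℓ))
          = A s (w 0) * P + ∑ m : Fin n, A s (w m.succ) *
              (L invq (w 0) * ∏ ℓ ∈ Finset.univ.erase m, L invq (w ℓ.succ)) := by
        rw [Fin.sum_univ_succ]
        congr 1
        · congr 1
          rw [erase_eq, Fin.prod_univ_succ, hP]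
          simp [Fin.succ_ne_zero]
        · refine Finset.sum_congr rfl fun m _ => ?_
          congr 1
          rw [erase_eq _ m.succ, Fin.prod_univ_succ,
            if_neg (Fin.succ_ne_zero m).symm]
          congr 1
          rw [erase_eq]
          refine Finset.prod_congr rfl fun i _ => ?_
          simp [Fin.succ_inj]
      rw [hsum]
      have hT2eq : S * L invq (w 0) = ∑ m : Fin n, A s (w m.succ) *
          (L invq (w 0) * ∏ ℓ ∈ Finset.univ.erase m, L invq (w ℓ.succ)) := by
        rw [hS, Finset.sum_mul]
        exact Finset.sum_congr rfl fun m _ => by ring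
      have hT2nn : 0 ≤ ∑ m : Fin n, A s (w m.succ) *
          (L invq (w 0) * ∏ ℓ ∈ Finset.univ.erase m, L invq (w ℓ.succ)) := by
        refine Finset.sum_nonneg fun m _ => mul_nonneg (hA _ _)
          (mul_nonneg (hL _ _) (Finset.prod_nonneg fun i _ => hL _ _))
      have hSnn : 0 ≤ S := by
        refine Finset.sum_nonneg fun m _ => mul_nonneg (hA _ _)
          (Finset.prod_nonneg fun i _ => hL _ _)
      have hPnn : 0 ≤ P := Finset.prod_nonneg fun i _ => hL _ _
      calc A (s + (n : ℝ) * invq) ((∏ i : Fin n, w i.succ) * w 0)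
          ≤ C * (A (s + ((n : ℝ) - 1) * invq) (∏ i : Fin n, w i.succ) * L invq (w 0)
              + A s (w 0) * L ((n : ℝ) * invq) (∏ i : Fin n, w i.succ)) := main
        _ ≤ C * ((C' * S) * L invq (w 0) + A s (w 0) * P) := by
            gcongr
            exact hL _ _
            exact hA _ _
        _ = C * (C' * (S * L invq (w 0)) + A s (w 0) * P) := by ring
        _ ≤ C * (C' + 1) * (A s (w 0) * P + ∑ m : Fin n, A s (w m.succ) *
              (L invq (w 0) * ∏ ℓ ∈ Finset.univ.erase m, L invq (w ℓ.succ))) := by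
            rw [hT2eq]
            have h1 : 0 ≤ A s (w 0) * P := mul_nonneg (hA _ _) hPnn
            nlinarith [mul_nonneg hC.le hT2nn, mul_nonneg (mul_nonneg hC.le hC'.le) h1]
  obtain ⟨C', hC', h⟩ := key p (by omega) le_rfl
  refine ⟨C', hC', fun w => ?_⟩
  have : invα₀ = s + ((p : ℝ) - 1) * invq := by rw [hs]; ring
  rw [this]
  exact h w
end
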